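/- arXiv:2601.07279 — 5 statements merged into one kernel-verified Lean document; each statement's English description precedes it below -/
import Mathlib

section
/- Let Z be a nonempty finite set and let 𝒟 be a family of 4-element subsets of Z such that every element of Z belongs to exactly 3 members of 𝒟 (so 3|Z| = 4|𝒟| and |Z| ≥ 4). Construct the parliamentary election whose running parties are one party p_D for each D ∈ 𝒟 together with 3|Z|+1 additional parties q_1, …, q_{3|Z|+1}, and whose voters are, for each z ∈ Z: one type-1 voter ranking q_1 first, then the three parties p_D with z ∈ D (in some fixed order), then q_2, …, q_{3|Z|+1}, then all remaining parties in some fixed order; and one type-2 voter ranking q_1 first, then q_2, …, q_{3|Z|+1}, then all parties p_D in some fixed order. Let the coalition be C = {p_D : D ∈ 𝒟}, let every voter's price function be s_i(x) = x, and let the electoral threshold be τ = 4/(2|Z|) (so a party is active iff it receives at least 4 votes). Then there exists a subfamily 𝒟' ⊆ 𝒟 whose members are pairwise disjoint and cover Z (an exact cover) if and only if there exists a coalition-shift bribe of total cost at most 3|Z| after which the active-vote fraction of C is at least 1/2. -/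
open scoped Classical

section Defs

variable {U V : Type*}

/-- `p` is the most-preferred member of the running set `P` under the linear order `L`
(greater means more preferred). -/
def TopOf (L : LinearOrder U) (P : Finset U) (p : U) : Prop :=
  p ∈ P ∧ ∀ q ∈ P, q ≠ p → L.lt q p

/-- Number of voters whose most-preferred running party lies in `A`. -/
noncomputable def votes [Fintype V] (pref : V → LinearOrder U) (P A : Finset U) : ℕ :=
  (Finset.univ.filter fun v : V => ∃ p ∈ A, TopOf (pref v) P p).card

/-- Fraction of voters whose most-preferred running party lies in `A`. -/
noncomputable def voteFrac [Fintype V] (pref : V → LinearOrder U) (P A : Finset U) : ℚ :=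
  (votes pref P A : ℚ) / (Fintype.card V : ℚ)

/-- Total number of votes received by active parties (receiving at least `T` votes) among `A`. -/
noncomputable def activeVotes [Fintype V] (pref : V → LinearOrder U) (P : Finset U) (T : ℕ)
    (A : Finset U) : ℕ :=
  ∑ p ∈ A, if T ≤ votes pref P {p} then votes pref P {p} else 0

/-- Active-vote fraction of `A`. -/
noncomputable def activeFrac [Fintype V] (pref : V → LinearOrder U) (P : Finset U) (T : ℕ)
    (A : Finset U) : ℚ :=
  (activeVotes pref P T A : ℚ) / (activeVotes pref P T P : ℚ)

/-- The linear order `L` respects the tier function `t` (smaller tier = more preferred). -/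
def PrefTiers (L : LinearOrder U) (t : U → ℕ) : Prop :=
  ∀ a b : U, t a < t b → L.lt b a

/-- Pairs `(p, q)` with `p ≻ q` under `L` and `q ≻ p` under `L'`. -/
noncomputable def invPairs [Fintype U] (L L' : LinearOrder U) : Finset (U × U) :=
  Finset.univ.filter fun pq : U × U => L.lt pq.2 pq.1 ∧ L'.lt pq.1 pq.2

/-- Swap-bribery cost of replacing `L` by `L'` with swap-price function `sw`. -/
noncomputable def swapCost [Fintype U] (L L' : LinearOrder U) (sw : U → U → ℝ) : ℝ :=
  ∑ pq ∈ invPairs L L', sw pq.1 pq.2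

end Defs

/-!
A voter's new favourite cannot be a party they originally ranked below all `3|Z| + 1` fillers
`q_j` (that alone costs more than the budget), nor a filler other than `q₁` (only coalition
parties may be promoted past `q₁`). So the type-2 voters keep `q₁` active with at least `|Z|`
votes, and each coalition vote comes from a type-1 voter `z` voting for some `p_D` with `z ∈ D`.
Such a `p_D` has at most `|D| = 4` potential voters, hence is active only if every member of `D`
votes for it: the active blocks are pairwise disjoint, and they collect the `|Z|` votes needed to
match `q₁` only if they cover `Z`. Conversely, for an exact cover let each type-1 voter move the
block containing them to the top, which costs at most three swaps.
-/

open Finset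

section Preferences

variable {U : Type*}

/- Stated for an explicit order so that `lt_asymm` cannot pick up another instance on the carrier,
such as the sum order on `Finset Z ⊕ Fin n`. -/
protected theorem LinearOrder.lt_asymm (L : LinearOrder U) {a b : U} (h : L.lt a b) :
    ¬ L.lt b a := by
  let := L
  exact h.asymm

protected theorem LinearOrder.ne_of_lt (L : LinearOrder U) {a b : U} (h : L.lt a b) : a ≠ b := by
  let := L
  exact h.ne

theorem TopOf.unique {L : LinearOrder U} {P : Finset U} {p p' : U}
    (h : TopOf L P p) (h' : TopOf L P p') : p = p' := by
  by_contra hne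
  exact L.lt_asymm (h.2 p' h'.1 (Ne.symm hne)) (h'.2 p h.1 hne)

theorem exists_topOf (L : LinearOrder U) {P : Finset U} (hP : P.Nonempty) :
    ∃ p, TopOf L P p := by
  let := L
  obtain ⟨p, hp, hmax⟩ := P.exists_max_image id hP
  exact ⟨p, hp, fun q hq hne => (hmax q hq).lt_of_ne hne⟩

theorem TopOf.eq_or_mem_of_shift {L L' : LinearOrder U} {P C : Finset U} {p x : U}
    (hp : TopOf L P p) (hx : TopOf L' P x) (hshift : ∀ a b, L.lt b a → L'.lt a b → b ∈ C) :
    x = p ∨ x ∈ C := by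
  by_cases h : x = p
  · exact Or.inl h
  · exact Or.inr (hshift p x (hp.2 x hx.1 h) (hx.2 p hp.1 (Ne.symm h)))

theorem PrefTiers.topOf {L : LinearOrder U} {t : U → ℕ} (hL : PrefTiers L t) {P : Finset U}
    {p : U} (hp : p ∈ P) (hmin : ∀ q ∈ P, q ≠ p → t p < t q) : TopOf L P p :=
  ⟨hp, fun q hq hne => hL p q (hmin q hq hne)⟩

theorem PrefTiers.le_of_lt {L : LinearOrder U} {t : U → ℕ} (hL : PrefTiers L t) {a b : U}
    (h : L.lt a b) : t b ≤ t a :=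
  not_lt.1 fun hab => L.lt_asymm (hL a b hab) h

end Preferences

section Votes

variable {U V : Type*} [Fintype V] {pref : V → LinearOrder U} {P : Finset U}

theorem votes_eq_card_filter [DecidableEq U] {tp : V → U} (htp : ∀ v, TopOf (pref v) P (tp v))
    (A : Finset U) : votes pref P A = #{v | tp v ∈ A} := by
  unfold votes
  congr 1
  refine filter_congr fun v _ => ⟨?_, fun h => ⟨tp v, h, htp v⟩⟩
  rintro ⟨p, hp, hv⟩
  rwa [(htp v).unique hv]

theorem votes_mono {A B : Finset U} (h : A ⊆ B) : votes pref P A ≤ votes pref P B :=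
  card_le_card fun v hv => by
    simp only [mem_filter, mem_univ, true_and] at hv ⊢
    obtain ⟨p, hp, hv⟩ := hv
    exact ⟨p, h hp, hv⟩

theorem sum_votes_singleton (A : Finset U) : ∑ p ∈ A, votes pref P {p} = votes pref P A := by
  simp only [votes, mem_singleton, exists_eq_left]
  rw [← card_biUnion]
  · congr 1
    ext v
    simp
  · intro p _ q _ hpq
    simp only [Function.onFun, disjoint_filter]
    exact fun v _ hp hq => hpq (hp.unique hq)

variable (pref P) in
noncomputable def activeParties (T : ℕ) (A : Finset U) : Finset U :=
  A.filter fun p => T ≤ votes pref P {p}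

theorem activeParties_subset (T : ℕ) (A : Finset U) : activeParties pref P T A ⊆ A :=
  filter_subset _ _

theorem activeVotes_eq_votes_activeParties (T : ℕ) (A : Finset U) :
    activeVotes pref P T A = votes pref P (activeParties pref P T A) := by
  rw [activeVotes, activeParties, ← sum_filter, sum_votes_singleton]

theorem activeVotes_le_votes (T : ℕ) (A : Finset U) : activeVotes pref P T A ≤ votes pref P A :=
  (activeVotes_eq_votes_activeParties T A).trans_le (votes_mono (activeParties_subset T A))

theorem activeVotes_union [DecidableEq U] {T : ℕ} {C R : Finset U} (h : Disjoint C R) :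
    activeVotes pref P T (C ∪ R) = activeVotes pref P T C + activeVotes pref P T R :=
  sum_union h

theorem half_le_activeFrac_union_iff [DecidableEq U] {T : ℕ} {C R : Finset U}
    (h : Disjoint C R) :
    (1 : ℚ) / 2 ≤ activeFrac pref (C ∪ R) T C ↔
      0 < activeVotes pref (C ∪ R) T C ∧
        activeVotes pref (C ∪ R) T R ≤ activeVotes pref (C ∪ R) T C := by
  rw [activeFrac, activeVotes_union h]
  set c := activeVotes pref (C ∪ R) T C
  set r := activeVotes pref (C ∪ R) T R
  rcases Nat.eq_zero_or_pos (c + r) with hcr | hcr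
  · have hc : c = 0 := by omega
    simp [hc]
  · rw [le_div_iff₀ (by exact_mod_cast hcr)]
    push_cast
    constructor
    · intro h'
      have hrc : r ≤ c := by exact_mod_cast (by linarith : (r : ℚ) ≤ c)
      exact ⟨by omega, hrc⟩
    · rintro ⟨-, hrc⟩
      have : (r : ℚ) ≤ c := by exact_mod_cast hrc
      linarith

end Votes

theorem card_filter_sum {α β : Type*} [Fintype α] [Fintype β] (p : α ⊕ β → Prop)
    [DecidablePred p] : #{v | p v} = #{a | p (Sum.inl a)} + #{b | p (Sum.inr b)} := by
  simp only [card_filter, Fintype.sum_sum_type]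

section Bribery

variable {U : Type*}

theorem invPairs_self [Fintype U] (L : LinearOrder U) : invPairs L L = ∅ := by
  ext
  simp only [invPairs, mem_filter, mem_univ, true_and, notMem_empty, iff_false, not_and]
  exact fun h => L.lt_asymm h

theorem card_le_card_invPairs_of_topOf [Fintype U] {L L' : LinearOrder U} {P S : Finset U}
    {x : U} (hS : S ⊆ P) (hx : TopOf L' P x) (hlt : ∀ a ∈ S, L.lt x a) :
    #S ≤ #(invPairs L L') := by
  refine card_le_card_of_injOn (fun a => (a, x)) (fun a ha => ?_)
    fun a _ b _ h => congrArg Prod.fst h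
  have hne : a ≠ x := (L.ne_of_lt (hlt a ha)).symm
  simpa [invPairs] using ⟨hlt a ha, hx.2 a (hS ha) hne⟩

noncomputable abbrev moveToTop (L : LinearOrder U) (t : U) : LinearOrder U :=
  let := L
  LinearOrder.lift' (fun a => toLex (decide (a = t), a)) fun _ _ h =>
    congrArg (fun x => (ofLex x).2) h

theorem moveToTop_lt (L : LinearOrder U) (t a b : U) :
    (moveToTop L t).lt a b ↔ (b = t ∧ a ≠ t) ∨ ((a = t ↔ b = t) ∧ L.lt a b) := by
  let := L
  change toLex (decide (a = t), a) < toLex (decide (b = t), b) ↔ _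
  rw [Prod.Lex.lt_iff]
  simp only [ofLex_toLex, Bool.lt_iff, decide_eq_true_eq, decide_eq_false_iff_not,
    decide_eq_decide]
  tauto

theorem topOf_moveToTop (L : LinearOrder U) {P : Finset U} {t : U} (ht : t ∈ P) :
    TopOf (moveToTop L t) P t :=
  ⟨ht, fun q _ hne => (moveToTop_lt L t q t).2 (Or.inl ⟨rfl, hne⟩)⟩

theorem eq_of_lt_of_moveToTop_lt {L : LinearOrder U} {t p q : U} (h : L.lt q p)
    (h' : (moveToTop L t).lt p q) : q = t := by
  rcases (moveToTop_lt L t p q).1 h' with ⟨hq, -⟩ | ⟨-, hpq⟩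
  · exact hq
  · exact absurd hpq (L.lt_asymm h)

theorem card_invPairs_moveToTop [Fintype U] (L : LinearOrder U) (t : U) :
    #(invPairs L (moveToTop L t)) = #{a | L.lt t a} := by
  have : invPairs L (moveToTop L t) = (univ.filter fun a => L.lt t a) ×ˢ {t} := by
    ext ⟨p, q⟩
    simp only [invPairs, moveToTop_lt, mem_filter, mem_univ, true_and, mem_product,
      mem_singleton]
    constructor
    · rintro ⟨hqp, ⟨rfl, -⟩ | ⟨-, hpq⟩⟩
      · exact ⟨hqp, rfl⟩
      · exact absurd hpq (L.lt_asymm hqp)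
    · rintro ⟨htp, rfl⟩
      exact ⟨htp, Or.inl ⟨rfl, (L.ne_of_lt htp).symm⟩⟩
  rw [this, card_product, card_singleton, mul_one]

end Bribery
section Reduction

variable {Z : Type*} [Fintype Z] [DecidableEq Z]

/- `Sum.inl D` is the party `p_D` and `Sum.inr j` is `q_{j+1}`. -/
abbrev Party (Z : Type*) [Fintype Z] := Finset Z ⊕ Fin (3 * Fintype.card Z + 1)

def coalition (𝒟 : Finset (Finset Z)) : Finset (Party Z) := 𝒟.image Sum.inl

def fillers : Finset (Party Z) := univ.image Sum.inr

def typeOneTier (𝒟 : Finset (Finset Z)) (z : Z) : Party Z → ℕ :=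
  Sum.elim (fun D => if D ∈ 𝒟 ∧ z ∈ D then 1 else 3) (fun j => if j = 0 then 0 else 2)

def typeTwoTier : Party Z → ℕ :=
  Sum.elim (fun _ => 2) (fun j => if j = 0 then 0 else 1)

variable {𝒟 : Finset (Finset Z)} {pref : Z ⊕ Z → LinearOrder (Party Z)}

theorem disjoint_coalition_fillers : Disjoint (coalition 𝒟) fillers := by
  simp [coalition, fillers, disjoint_left]

theorem inl_mem_coalition {D : Finset Z} : Sum.inl D ∈ coalition 𝒟 ↔ D ∈ 𝒟 := by
  simp [coalition]

theorem inr_notMem_coalition (j : Fin (3 * Fintype.card Z + 1)) : Sum.inr j ∉ coalition 𝒟 := by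
  simp [coalition]

theorem inr_zero_mem_coalition_union_fillers : Sum.inr 0 ∈ coalition 𝒟 ∪ fillers :=
  mem_union_right _ (mem_image_of_mem _ (mem_univ 0))

theorem topOf_inr_zero (hpref1 : ∀ z, PrefTiers (pref (Sum.inl z)) (typeOneTier 𝒟 z))
    (hpref2 : ∀ z, PrefTiers (pref (Sum.inr z)) typeTwoTier) (v : Z ⊕ Z) :
    TopOf (pref v) (coalition 𝒟 ∪ fillers) (Sum.inr 0) := by
  rcases v with z | z
  · refine (hpref1 z).topOf inr_zero_mem_coalition_union_fillers fun q _ hne => ?_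
    rcases q with D | j
    · simp only [typeOneTier, Sum.elim_inl, Sum.elim_inr]; split_ifs <;> omega
    · simp_all [typeOneTier]
  · refine (hpref2 z).topOf inr_zero_mem_coalition_union_fillers fun q _ hne => ?_
    rcases q with D | j
    · simp [typeTwoTier]
    · simp_all [typeTwoTier]

section Forward

noncomputable abbrev coverBribe (pref : Z ⊕ Z → LinearOrder (Party Z)) (cover : Z → Finset Z) :
    Z ⊕ Z → LinearOrder (Party Z) :=
  Sum.elim (fun z => moveToTop (pref (Sum.inl z)) (Sum.inl (cover z))) (fun z => pref (Sum.inr z))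

variable {cover : Z → Finset Z}

theorem coverBribe_promotes_coalition (hcover : ∀ z, cover z ∈ 𝒟) (v : Z ⊕ Z) (p q : Party Z)
    (h : (pref v).lt q p) (h' : (coverBribe pref cover v).lt p q) : q ∈ coalition 𝒟 := by
  rcases v with z | z
  · rw [eq_of_lt_of_moveToTop_lt h h']
    exact mem_image_of_mem _ (hcover z)
  · exact absurd h' ((pref _).lt_asymm h)

theorem card_filter_lt_inl_le_three (hpref1 : ∀ z, PrefTiers (pref (Sum.inl z)) (typeOneTier 𝒟 z))
    (h3 : ∀ z : Z, (𝒟.filter fun D => z ∈ D).card = 3) {z : Z} {D : Finset Z} (hD : D ∈ 𝒟)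
    (hz : z ∈ D) : #{a | (pref (Sum.inl z)).lt (Sum.inl D) a} ≤ 3 := by
  have hsub : ({a | (pref (Sum.inl z)).lt (Sum.inl D) a} : Finset (Party Z)) ⊆
      (insert (Sum.inr 0) ((𝒟.filter fun D => z ∈ D).image Sum.inl)).erase (Sum.inl D) := by
    intro a ha
    have hle := (hpref1 z).le_of_lt (mem_filter.1 ha).2
    have hne : a ≠ Sum.inl D := ((pref _).ne_of_lt (mem_filter.1 ha).2).symm
    rcases a with D' | j
    · have hD' : D' ∈ 𝒟 ∧ z ∈ D' := by
        by_contra h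
        simp only [typeOneTier, Sum.elim_inl, hD, hz, and_self, if_true, if_neg h] at hle
        omega
      simp_all
    · simp only [typeOneTier, Sum.elim_inl, Sum.elim_inr, hD, hz, and_self, if_true] at hle
      split_ifs at hle with hj <;> simp_all
  calc #{a | (pref (Sum.inl z)).lt (Sum.inl D) a} ≤ _ := card_le_card hsub
    _ ≤ 3 := by
      rw [card_erase_of_mem (mem_insert_of_mem (mem_image_of_mem _ (mem_filter.2 ⟨hD, hz⟩)))]
      have := card_insert_le (Sum.inr 0 : Party Z) ((𝒟.filter fun D => z ∈ D).image Sum.inl)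
      rw [card_image_of_injective _ Sum.inl_injective, h3 z] at this
      omega

theorem coverBribe_cost (hpref1 : ∀ z, PrefTiers (pref (Sum.inl z)) (typeOneTier 𝒟 z))
    (h3 : ∀ z : Z, (𝒟.filter fun D => z ∈ D).card = 3) (hcover : ∀ z, cover z ∈ 𝒟)
    (hmem : ∀ z, z ∈ cover z) :
    ∑ v, #(invPairs (pref v) (coverBribe pref cover v)) ≤ 3 * Fintype.card Z := by
  simp only [Fintype.sum_sum_type, coverBribe, Sum.elim_inl, Sum.elim_inr,
    card_invPairs_moveToTop, invPairs_self, card_empty, sum_const_zero, add_zero]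
  calc ∑ z, #{a | (pref (Sum.inl z)).lt (Sum.inl (cover z)) a}
      ≤ ∑ _z : Z, 3 := sum_le_sum fun z _ => card_filter_lt_inl_le_three hpref1 h3 (hcover z) (hmem z)
    _ = 3 * Fintype.card Z := by rw [sum_const, card_univ, smul_eq_mul, mul_comm]

theorem filter_cover_eq_self (hmem : ∀ z, z ∈ cover z)
    (hexact : ∀ z z', z' ∈ cover z → cover z' = cover z) (z : Z) :
    ({z' | cover z' = cover z} : Finset Z) = cover z := by
  ext z'
  simp only [mem_filter, mem_univ, true_and]
  exact ⟨fun h => h ▸ hmem z', hexact z z'⟩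

theorem half_le_activeFrac_coverBribe
    (hpref1 : ∀ z, PrefTiers (pref (Sum.inl z)) (typeOneTier 𝒟 z))
    (hpref2 : ∀ z, PrefTiers (pref (Sum.inr z)) typeTwoTier)
    (h4 : ∀ D ∈ 𝒟, D.card = 4) (hn : 4 ≤ Fintype.card Z) (hcover : ∀ z, cover z ∈ 𝒟)
    (hmem : ∀ z, z ∈ cover z) (hexact : ∀ z z', z' ∈ cover z → cover z' = cover z) :
    (1 : ℚ) / 2 ≤ activeFrac (coverBribe pref cover) (coalition 𝒟 ∪ fillers) 4 (coalition 𝒟) := by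
  set tp : Z ⊕ Z → Party Z := Sum.elim (fun z => Sum.inl (cover z)) (fun _ => Sum.inr 0)
  have htp : ∀ v, TopOf (coverBribe pref cover v) (coalition 𝒟 ∪ fillers) (tp v) := by
    rintro (z | z)
    · exact topOf_moveToTop _ (mem_union_left _ (mem_image_of_mem _ (hcover z)))
    · exact topOf_inr_zero hpref1 hpref2 (Sum.inr z)
  have hactive : ∀ z, Sum.inl (cover z) ∈
      activeParties (coverBribe pref cover) (coalition 𝒟 ∪ fillers) 4 (coalition 𝒟) := by
    intro z
    refine mem_filter.2 ⟨mem_image_of_mem _ (hcover z), ?_⟩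
    rw [votes_eq_card_filter htp, card_filter_sum]
    simp [tp, filter_cover_eq_self hmem hexact, h4 _ (hcover z)]
  have hC : Fintype.card Z ≤ votes (coverBribe pref cover) (coalition 𝒟 ∪ fillers)
      (activeParties (coverBribe pref cover) (coalition 𝒟 ∪ fillers) 4 (coalition 𝒟)) := by
    rw [votes_eq_card_filter htp, card_filter_sum]
    simp [tp, hactive]
  have hR : votes (coverBribe pref cover) (coalition 𝒟 ∪ fillers) fillers ≤ Fintype.card Z := by
    rw [votes_eq_card_filter htp, card_filter_sum]
    simp [tp, fillers]
  rw [half_le_activeFrac_union_iff disjoint_coalition_fillers, activeVotes_eq_votes_activeParties]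
  have := activeVotes_le_votes (pref := coverBribe pref cover) (P := coalition 𝒟 ∪ fillers) 4 fillers
  omega

end Forward

section Backward

variable {pref' : Z ⊕ Z → LinearOrder (Party Z)}

theorem topOf_bribe_cases (hpref1 : ∀ z, PrefTiers (pref (Sum.inl z)) (typeOneTier 𝒟 z))
    (hpref2 : ∀ z, PrefTiers (pref (Sum.inr z)) typeTwoTier) {v : Z ⊕ Z}
    (hshift : ∀ p q, (pref v).lt q p → (pref' v).lt p q → q ∈ coalition 𝒟)
    (hcost : #(invPairs (pref v) (pref' v)) ≤ 3 * Fintype.card Z) {x : Party Z}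
    (hx : TopOf (pref' v) (coalition 𝒟 ∪ fillers) x) :
    x = Sum.inr 0 ∨ ∃ D, x = Sum.inl D ∧ ∃ j, ¬ (pref v).lt (Sum.inl D) (Sum.inr j) := by
  rcases (topOf_inr_zero hpref1 hpref2 v).eq_or_mem_of_shift hx hshift with h | h
  · exact Or.inl h
  obtain ⟨D, -, rfl⟩ := mem_image.1 h
  refine Or.inr ⟨D, rfl, ?_⟩
  -- otherwise `p_D` is swapped past every filler
  by_contra! hbelow
  have := card_le_card_invPairs_of_topOf subset_union_right hx fun a ha => by
    obtain ⟨j, -, rfl⟩ := mem_image.1 ha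
    exact hbelow j
  rw [fillers, card_image_of_injective _ Sum.inr_injective, card_univ, Fintype.card_fin] at this
  omega

theorem topOf_bribe_inl (hpref1 : ∀ z, PrefTiers (pref (Sum.inl z)) (typeOneTier 𝒟 z))
    (hpref2 : ∀ z, PrefTiers (pref (Sum.inr z)) typeTwoTier) {z : Z}
    (hshift : ∀ p q, (pref (Sum.inl z)).lt q p → (pref' (Sum.inl z)).lt p q → q ∈ coalition 𝒟)
    (hcost : #(invPairs (pref (Sum.inl z)) (pref' (Sum.inl z))) ≤ 3 * Fintype.card Z)
    {x : Party Z} (hx : TopOf (pref' (Sum.inl z)) (coalition 𝒟 ∪ fillers) x) :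
    x = Sum.inr 0 ∨ ∃ D, x = Sum.inl D ∧ z ∈ D := by
  rcases topOf_bribe_cases hpref1 hpref2 hshift hcost hx with h | ⟨D, rfl, j, hj⟩
  · exact Or.inl h
  · refine Or.inr ⟨D, rfl, by_contra fun hz => hj (hpref1 z _ _ ?_)⟩
    simp only [typeOneTier, Sum.elim_inl, Sum.elim_inr]
    split_ifs <;> simp_all

theorem topOf_bribe_inr (hpref1 : ∀ z, PrefTiers (pref (Sum.inl z)) (typeOneTier 𝒟 z))
    (hpref2 : ∀ z, PrefTiers (pref (Sum.inr z)) typeTwoTier) {z : Z}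
    (hshift : ∀ p q, (pref (Sum.inr z)).lt q p → (pref' (Sum.inr z)).lt p q → q ∈ coalition 𝒟)
    (hcost : #(invPairs (pref (Sum.inr z)) (pref' (Sum.inr z))) ≤ 3 * Fintype.card Z)
    {x : Party Z} (hx : TopOf (pref' (Sum.inr z)) (coalition 𝒟 ∪ fillers) x) :
    x = Sum.inr 0 := by
  rcases topOf_bribe_cases hpref1 hpref2 hshift hcost hx with h | ⟨D, rfl, j, hj⟩
  · exact h
  · refine absurd (hpref2 z _ _ ?_) hj
    simp only [typeTwoTier, Sum.elim_inl, Sum.elim_inr]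
    split_ifs <;> omega

theorem votes_singleton_eq_of_topOf {tp : Z ⊕ Z → Party Z}
    (htp : ∀ v, TopOf (pref' v) (coalition 𝒟 ∪ fillers) (tp v))
    (htp2 : ∀ z, tp (Sum.inr z) = Sum.inr 0) (p : Party Z) :
    votes pref' (coalition 𝒟 ∪ fillers) {p} =
      #{z | tp (Sum.inl z) = p} + if p = Sum.inr 0 then Fintype.card Z else 0 := by
  rw [votes_eq_card_filter htp, card_filter_sum]
  split_ifs with hp
  · simp [htp2, hp]
  · simp [htp2, Ne.symm hp]

theorem eq_inl_of_inl_mem_activeParties (h4 : ∀ D ∈ 𝒟, D.card = 4) {tp : Z ⊕ Z → Party Z}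
    (htp : ∀ v, TopOf (pref' v) (coalition 𝒟 ∪ fillers) (tp v))
    (htp1 : ∀ z, tp (Sum.inl z) = Sum.inr 0 ∨ ∃ D, tp (Sum.inl z) = Sum.inl D ∧ z ∈ D)
    (htp2 : ∀ z, tp (Sum.inr z) = Sum.inr 0) {D : Finset Z}
    (hD : Sum.inl D ∈ activeParties pref' (coalition 𝒟 ∪ fillers) 4 (coalition 𝒟)) {z : Z}
    (hz : z ∈ D) : tp (Sum.inl z) = Sum.inl D := by
  obtain ⟨hDC, hD4⟩ := mem_filter.1 hD
  have hsub : ({z | tp (Sum.inl z) = Sum.inl D} : Finset Z) ⊆ D := fun z hz => by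
    rcases htp1 z with h | ⟨D', h, hz'⟩ <;> simp_all
  have hcard : #D ≤ #{z | tp (Sum.inl z) = Sum.inl D} := by
    simpa [h4 D (inl_mem_coalition.1 hDC), votes_singleton_eq_of_topOf htp htp2] using hD4
  rw [← eq_of_subset_of_card_le hsub hcard] at hz
  exact (mem_filter.1 hz).2

theorem inl_top_mem_activeParties (hn : 4 ≤ Fintype.card Z) {tp : Z ⊕ Z → Party Z}
    (htp : ∀ v, TopOf (pref' v) (coalition 𝒟 ∪ fillers) (tp v))
    (htp2 : ∀ z, tp (Sum.inr z) = Sum.inr 0)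
    (hRC : activeVotes pref' (coalition 𝒟 ∪ fillers) 4 fillers ≤
      activeVotes pref' (coalition 𝒟 ∪ fillers) 4 (coalition 𝒟)) (z : Z) :
    tp (Sum.inl z) ∈ activeParties pref' (coalition 𝒟 ∪ fillers) 4 (coalition 𝒟) := by
  set A := activeParties pref' (coalition 𝒟 ∪ fillers) 4 (coalition 𝒟) with hAdef
  have hq₁ : Fintype.card Z ≤ votes pref' (coalition 𝒟 ∪ fillers) {Sum.inr 0} := by
    simp [votes_singleton_eq_of_topOf htp htp2]
  have hR : Fintype.card Z ≤ activeVotes pref' (coalition 𝒟 ∪ fillers) 4 fillers := by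
    rw [activeVotes_eq_votes_activeParties]
    refine hq₁.trans (votes_mono (singleton_subset_iff.2 (mem_filter.2 ⟨?_, by omega⟩)))
    exact mem_image_of_mem _ (mem_univ 0)
  have hA : Sum.inr 0 ∉ A := fun h => inr_notMem_coalition 0 (activeParties_subset _ _ h)
  rw [activeVotes_eq_votes_activeParties 4 (coalition 𝒟), votes_eq_card_filter htp,
    card_filter_sum, ← hAdef] at hRC
  simp only [htp2] at hRC
  rw [filter_false_of_mem fun _ _ => hA, card_empty, add_zero] at hRC
  have hfull := eq_univ_of_card ({z | tp (Sum.inl z) ∈ A} : Finset Z)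
    (le_antisymm (card_le_univ _) (by omega))
  exact (mem_filter.1 (eq_univ_iff_forall.1 hfull z)).2

theorem exists_exactCover_of_topOf (h4 : ∀ D ∈ 𝒟, D.card = 4) (hn : 4 ≤ Fintype.card Z)
    {tp : Z ⊕ Z → Party Z} (htp : ∀ v, TopOf (pref' v) (coalition 𝒟 ∪ fillers) (tp v))
    (htp1 : ∀ z, tp (Sum.inl z) = Sum.inr 0 ∨ ∃ D, tp (Sum.inl z) = Sum.inl D ∧ z ∈ D)
    (htp2 : ∀ z, tp (Sum.inr z) = Sum.inr 0)
    (hRC : activeVotes pref' (coalition 𝒟 ∪ fillers) 4 fillers ≤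
      activeVotes pref' (coalition 𝒟 ∪ fillers) 4 (coalition 𝒟)) :
    ∃ 𝒟' ⊆ 𝒟, (∀ D1 ∈ 𝒟', ∀ D2 ∈ 𝒟', D1 ≠ D2 → Disjoint D1 D2) ∧ ∀ z : Z, ∃ D ∈ 𝒟', z ∈ D := by
  set A := activeParties pref' (coalition 𝒟 ∪ fillers) 4 (coalition 𝒟)
  have hwinner {D : Finset Z} (hD : Sum.inl D ∈ A) {z : Z} (hz : z ∈ D) :=
    eq_inl_of_inl_mem_activeParties h4 htp htp1 htp2 hD hz
  have hall := inl_top_mem_activeParties hn htp htp2 hRC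
  refine ⟨𝒟.filter (Sum.inl · ∈ A), filter_subset _ _, fun D1 h1 D2 h2 hne => ?_, fun z => ?_⟩
  · refine disjoint_left.2 fun z hz1 hz2 => hne ?_
    exact Sum.inl_injective
      ((hwinner (mem_filter.1 h1).2 hz1).symm.trans (hwinner (mem_filter.1 h2).2 hz2))
  · rcases htp1 z with h | ⟨D, h, hz⟩
    · exact absurd (h ▸ hall z) fun h => inr_notMem_coalition 0 (activeParties_subset _ _ h)
    · have hDA := h ▸ hall z
      exact ⟨D, mem_filter.2 ⟨inl_mem_coalition.1 (activeParties_subset _ _ hDA), hDA⟩, hz⟩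

end Backward

end Reduction

/-- Coalition-shift bribery reduction from 3-4-Exact-Cover.  Parties:
one party $p_D$ (= `Sum.inl D`) per $D ∈ 𝒟$ and parties $q_1,…,q_{3|Z|+1}$
(= `Sum.inr j`); voters: per $z ∈ Z$, a type-1 voter (`Sum.inl z`) ranking $q_1$ first,
then the three $p_D$ with $z ∈ D$, then $q_2,…,q_{3|Z|+1}$, then the rest, and a type-2
voter (`Sum.inr z`) ranking $q_1$ first, then $q_2,…,q_{3|Z|+1}$, then the rest.  The
coalition is $\{p_D : D ∈ 𝒟\}$, each price function is $s_i(x)=x$, a party is active iff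
it gets at least $4$ votes.  Then an exact cover exists iff there is a coalition-shift
bribe of total cost at most $3|Z|$ after which the coalition's active-vote fraction is at
least $1/2$. -/
theorem coalition_shift_exact_cover_reduction
    {Z : Type*} [Fintype Z] [DecidableEq Z] [Nonempty Z]
    (𝒟 : Finset (Finset Z))
    (h4 : ∀ D ∈ 𝒟, D.card = 4)
    (h3 : ∀ z : Z, (𝒟.filter fun D => z ∈ D).card = 3)
    (pref : Z ⊕ Z → LinearOrder (Finset Z ⊕ Fin (3 * Fintype.card Z + 1)))
    (hpref1 : ∀ z : Z, PrefTiers (pref (Sum.inl z))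
      (Sum.elim (fun D => if D ∈ 𝒟 ∧ z ∈ D then (1 : ℕ) else 3)
        (fun j => if j = 0 then 0 else 2)))
    (hpref2 : ∀ z : Z, PrefTiers (pref (Sum.inr z))
      (Sum.elim (fun _ => (2 : ℕ)) (fun j => if j = 0 then 0 else 1))) :
    (∃ 𝒟' ⊆ 𝒟, (∀ D1 ∈ 𝒟', ∀ D2 ∈ 𝒟', D1 ≠ D2 → Disjoint D1 D2) ∧
        ∀ z : Z, ∃ D ∈ 𝒟', z ∈ D) ↔
    (∃ pref' : Z ⊕ Z → LinearOrder (Finset Z ⊕ Fin (3 * Fintype.card Z + 1)),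
      (∀ (v : Z ⊕ Z) (p q : Finset Z ⊕ Fin (3 * Fintype.card Z + 1)),
        (pref v).lt q p → (pref' v).lt p q → q ∈ 𝒟.image Sum.inl) ∧
      (∑ v : Z ⊕ Z, (invPairs (pref v) (pref' v)).card) ≤ 3 * Fintype.card Z ∧
      (1 : ℚ) / 2 ≤
        activeFrac pref' (𝒟.image Sum.inl ∪ Finset.univ.image Sum.inr) 4
          (𝒟.image Sum.inl)) := by
  have hn : 4 ≤ Fintype.card Z := by
    obtain ⟨z⟩ := ‹Nonempty Z›
    obtain ⟨D, hD⟩ : (𝒟.filter fun D => z ∈ D).Nonempty := card_pos.1 (by rw [h3 z]; norm_num)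
    exact h4 D (mem_filter.1 hD).1 ▸ card_le_univ D
  constructor
  · rintro ⟨𝒟', hsub, hdisj, hcov⟩
    choose cover hcover hmem using hcov
    have hexact : ∀ z z', z' ∈ cover z → cover z' = cover z := fun z z' hz' =>
      by_contra fun hne => disjoint_left.1 (hdisj _ (hcover z') _ (hcover z) hne) (hmem z') hz'
    exact ⟨coverBribe pref cover, coverBribe_promotes_coalition (hsub <| hcover ·),
      coverBribe_cost hpref1 h3 (hsub <| hcover ·) hmem,
      half_le_activeFrac_coverBribe hpref1 hpref2 h4 hn (hsub <| hcover ·) hmem hexact⟩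
  · rintro ⟨pref', hshift, hcost, hfrac⟩
    have hcost' : ∀ v, #(invPairs (pref v) (pref' v)) ≤ 3 * Fintype.card Z := fun v =>
      (single_le_sum (fun _ _ => Nat.zero_le _) (mem_univ v)).trans hcost
    choose tp htp using fun v => exists_topOf (pref' v) ⟨_, inr_zero_mem_coalition_union_fillers (𝒟 := 𝒟)⟩
    exact exists_exactCover_of_topOf h4 hn htp
      (fun z => topOf_bribe_inl hpref1 hpref2 (hshift _) (hcost' _) (htp _))
      (fun z => topOf_bribe_inr hpref1 hpref2 (hshift _) (hcost' _) (htp _))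
      ((half_le_activeFrac_union_iff disjoint_coalition_fillers).1 hfrac).2
end

section
/- Let U be a finite universe of parties, C ⊆ U a coalition, V a finite set of voters with strict linear orders ≻_i over U, B ≥ 0 a budget, and for each voter i a nonnegative slope c_i ≥ 0. Define swap prices by sw_i(p,q) = c_i if q ∈ C and sw_i(p,q) = B+1 otherwise. Then, for every profile of strict linear orders (≻̂_i)_{i∈V} over U, the total swap-bribe cost of (≻̂_i) is at most B if and only if (≻̂_i) is a valid coalition-shift bribe (i.e., for every voter i and every pair of parties with p ≻_i q and q ≻̂_i p one has q ∈ C) whose total coalition-shift cost with the multiplicative price functions s_i(x) = c_i·x is at most B. -/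
open scoped Classical

/-- With swap prices $sw_i(p,q) = c_i$ for $q ∈ C$ and $B+1$ otherwise,
a profile of new orders has total swap cost at most $B$ iff it is a valid coalition-shift
bribe whose total coalition-shift cost, with multiplicative prices $s_i(x) = c_i·x$, is at
most $B$. -/
theorem swap_bribery_iff_coalition_shift
    {U V : Type*} [Fintype U] [Fintype V]
    (C : Finset U) (pref : V → LinearOrder U)
    (B : ℝ) (hB : 0 ≤ B) (c : V → ℝ) (hc : ∀ i, 0 ≤ c i)
    (sw : V → U → U → ℝ)
    (hsw : ∀ i : V, ∀ p q : U, sw i p q = if q ∈ C then c i else B + 1)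
    (pref' : V → LinearOrder U) :
    (∑ i : V, swapCost (pref i) (pref' i) (sw i)) ≤ B ↔
      ((∀ i : V, ∀ p q : U, (pref i).lt q p → (pref' i).lt p q → q ∈ C) ∧
        (∑ i : V, c i * ((invPairs (pref i) (pref' i)).card : ℝ)) ≤ B) := by
  have hterm : ∀ i : V, ∀ pq : U × U, 0 ≤ sw i pq.1 pq.2 := by
    intro i pq
    rw [hsw]
    split
    · exact hc i
    · linarith
  have hnn : ∀ i, 0 ≤ swapCost (pref i) (pref' i) (sw i) := fun i =>
    Finset.sum_nonneg fun pq _ => hterm i pq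
  have heq : ∀ i : V, (∀ p q : U, (pref i).lt q p → (pref' i).lt p q → q ∈ C) →
      swapCost (pref i) (pref' i) (sw i) = c i * ((invPairs (pref i) (pref' i)).card : ℝ) := by
    intro i hv
    unfold swapCost
    rw [Finset.sum_congr rfl (g := fun _ => c i) (fun pq hpq => ?_)]
    · rw [Finset.sum_const, nsmul_eq_mul, mul_comm]
    · have hmem : pq.2 ∈ C := by
        simp only [invPairs, Finset.mem_filter] at hpq
        exact hv pq.1 pq.2 hpq.2.1 hpq.2.2
      rw [hsw]; simp [hmem]
  constructor
  · intro h
    have hvalid : ∀ i : V, ∀ p q : U, (pref i).lt q p → (pref' i).lt p q → q ∈ C := by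
      intro i p q h1 h2
      by_contra hqC
      have hmem : (p, q) ∈ invPairs (pref i) (pref' i) := by
        simp [invPairs, h1, h2]
      have hcost : B + 1 ≤ swapCost (pref i) (pref' i) (sw i) := by
        have := Finset.single_le_sum (f := fun pq : U × U => sw i pq.1 pq.2)
          (fun pq _ => hterm i pq) hmem
        simp only [hsw, hqC, if_false] at this
        simpa [swapCost, hsw] using this
      have htot : swapCost (pref i) (pref' i) (sw i) ≤
          ∑ j : V, swapCost (pref j) (pref' j) (sw j) :=
        Finset.single_le_sum (fun j _ => hnn j) (Finset.mem_univ i)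
      linarith
    refine ⟨hvalid, ?_⟩
    calc (∑ i : V, c i * ((invPairs (pref i) (pref' i)).card : ℝ))
        = ∑ i : V, swapCost (pref i) (pref' i) (sw i) :=
          Finset.sum_congr rfl fun i _ => (heq i (hvalid i)).symm
      _ ≤ B := h
  · rintro ⟨hvalid, hcost⟩
    calc (∑ i : V, swapCost (pref i) (pref' i) (sw i))
        = ∑ i : V, c i * ((invPairs (pref i) (pref' i)).card : ℝ) :=
          Finset.sum_congr rfl fun i _ => heq i (hvalid i)
      _ ≤ B := hcost
end

section
/- Let G=(W,E) be a finite simple graph with E nonempty, let k be a natural number, and fix an orientation (x_e, y_e) of each edge e ∈ E. Construct the parliamentary election whose running parties are p_1 and one party s_w for each vertex w ∈ W, with exactly one voter per edge e ∈ E, ranking s_{x_e} ≻ s_{y_e} ≻ p_1 ≻ (all remaining parties in some fixed order). Let the coalition be C = {p_1}, with no electoral threshold. Then G contains a k-clique if and only if there exists a set P⁻ ⊆ {s_w : w ∈ W} with |P⁻| ≤ k such that, in the election obtained by deleting the parties of P⁻, the vote fraction of {p_1} is at least (k(k−1)/2)/|E|. -/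
open scoped Classical

/-! Deleting the vertex parties of `K ⊆ W` hands `p₁` exactly the voters of the edges inside `K`,
and there are at most `C(|K|, 2)` of them, with equality iff `K` is a clique. So if `|K| ≤ k` and
`p₁` gets at least `C(k, 2)` votes, then `K` is a clique with `C(k, 2) ≤ C(|K|, 2)`, which contains
a `k`-clique (for `k ≤ 1` any `k` vertices do). -/

open Finset

theorem Nat.le_of_choose_two_le_choose_two {m n : ℕ} (h : n.choose 2 ≤ m.choose 2) (hn : 2 ≤ n) :
    n ≤ m := by
  by_contra! hmn
  obtain ⟨n, rfl⟩ := Nat.exists_eq_add_of_le' (by omega : 1 ≤ n)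
  have hsucc : (n + 1).choose 2 = n + n.choose 2 := by
    rw [Nat.choose_succ_succ', Nat.choose_one_right]
  have := Nat.choose_le_choose 2 (Nat.le_of_lt_succ hmn)
  omega

namespace SimpleGraph

variable {V : Type*} (G : SimpleGraph V)

section EdgesWithin

variable [DecidableEq V] [Fintype G.edgeSet]

theorem edgeFinset_inter_sym2_subset (s : Finset V) :
    G.edgeFinset ∩ s.sym2 ⊆ s.offDiag.image Sym2.mk.uncurry := by
  intro e he
  rw [mem_inter, mem_edgeFinset, mem_sym2_iff] at he
  induction e using Sym2.ind with
  | h a b =>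
    exact mem_image.2 ⟨(a, b), mem_offDiag.2 ⟨he.2 a (Sym2.mem_mk_left a b),
      he.2 b (Sym2.mem_mk_right a b), he.1.ne⟩, rfl⟩

theorem card_edgeFinset_inter_sym2_le (s : Finset V) :
    #(G.edgeFinset ∩ s.sym2) ≤ (#s).choose 2 :=
  Sym2.card_image_offDiag s ▸ card_le_card (G.edgeFinset_inter_sym2_subset s)

theorem isClique_iff_image_offDiag_subset_edgeFinset {s : Finset V} :
    G.IsClique (s : Set V) ↔ s.offDiag.image Sym2.mk.uncurry ⊆ G.edgeFinset := by
  simp only [IsClique, Set.Pairwise, subset_iff, mem_image, mem_offDiag, Prod.exists,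
    mem_edgeFinset]
  constructor
  · rintro h _ ⟨a, b, ⟨ha, hb, hab⟩, rfl⟩
    exact h ha hb hab
  · intro h a ha b hb hab
    exact h ⟨a, b, ⟨ha, hb, hab⟩, rfl⟩

theorem isClique_iff_choose_two_le_card_edgeFinset_inter_sym2 {s : Finset V} :
    G.IsClique (s : Set V) ↔ (#s).choose 2 ≤ #(G.edgeFinset ∩ s.sym2) := by
  rw [isClique_iff_image_offDiag_subset_edgeFinset, ← Sym2.card_image_offDiag]
  constructor
  · intro h
    refine card_le_card fun e he => mem_inter.2 ⟨h he, ?_⟩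
    obtain ⟨⟨a, b⟩, hab, rfl⟩ := mem_image.1 he
    exact mk_mem_sym2_iff.2 ⟨(mem_offDiag.1 hab).1, (mem_offDiag.1 hab).2.1⟩
  · intro h
    rw [← eq_of_subset_of_card_le (G.edgeFinset_inter_sym2_subset s) h]
    exact inter_subset_left

end EdgesWithin

theorem exists_card_eq_isClique_of_choose_two_le [Fintype V] [Nonempty V] {s : Finset V}
    (hs : G.IsClique (s : Set V)) {k : ℕ} (hk : k.choose 2 ≤ (#s).choose 2) :
    ∃ t : Finset V, #t = k ∧ G.IsClique (t : Set V) := by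
  rcases le_or_gt k 1 with hk1 | hk2
  · obtain ⟨t, -, ht⟩ :=
      exists_subset_card_eq (s := (univ : Finset V)) (hk1.trans (card_pos.2 univ_nonempty))
    exact ⟨t, ht, IsClique.of_subsingleton (card_le_one_iff_subsingleton.1 (ht ▸ hk1))⟩
  · obtain ⟨t, hts, ht⟩ := exists_subset_card_eq (Nat.le_of_choose_two_le_choose_two hk hk2)
    exact ⟨t, ht, hs.subset (coe_subset.2 hts)⟩

end SimpleGraph

namespace PrefTiers

variable {U : Type*} {L : LinearOrder U} {t : U → ℕ} {P : Finset U} {p q : U}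

theorem topOf_s6 (h : PrefTiers L t) (hp : p ∈ P) (hP : ∀ q ∈ P, q ≠ p → t p < t q) :
    TopOf L P p :=
  ⟨hp, fun q hq hqp => h p q (hP q hq hqp)⟩

theorem not_topOf (h : PrefTiers L t) (hq : q ∈ P) (hqp : t q < t p) :
    ¬ TopOf L P p := fun hp =>
  letI := L
  lt_asymm (h q p hqp) (hp.2 q hq (ne_of_apply_ne t hqp.ne))

end PrefTiers

section EdgeVoter

variable {W : Type*} [Fintype W] [DecidableEq W]

/-- Tiers of a voter ranking `s_a ≻ s_b ≻ p₁ ≻` all other vertex parties, where the vertex party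
`s_w` is `Sum.inl w` and `p₁` is `Sum.inr ()`. -/
def edgeVoterTier (a b : W) : W ⊕ Unit → ℕ :=
  Sum.elim (fun w => if w = a then 0 else if w = b then 1 else 3) fun _ => 2

theorem topOf_inr_iff_of_prefTiers_edgeVoterTier {L : LinearOrder (W ⊕ Unit)} {a b : W}
    (h : PrefTiers L (edgeVoterTier a b)) (K : Finset W) :
    TopOf L (univ \ K.image Sum.inl) (Sum.inr ()) ↔ a ∈ K ∧ b ∈ K := by
  have hinl : ∀ w, (Sum.inl w : W ⊕ Unit) ∈ univ \ K.image Sum.inl ↔ w ∉ K := by simp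
  constructor
  · intro htop
    refine ⟨by_contra fun ha => h.not_topOf ((hinl a).2 ha) (by simp [edgeVoterTier]) htop,
      by_contra fun hb => h.not_topOf ((hinl b).2 hb) ?_ htop⟩
    simp only [edgeVoterTier, Sum.elim_inl, Sum.elim_inr]
    split_ifs <;> omega
  · rintro ⟨ha, hb⟩
    refine h.topOf_s6 (by simp) ?_
    rintro (w | u) hw hne
    · have hwK := (hinl w).1 hw
      have hwa : w ≠ a := by rintro rfl; exact hwK ha
      have hwb : w ≠ b := by rintro rfl; exact hwK hb
      simp [edgeVoterTier, hwa, hwb]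
    · exact absurd rfl hne

theorem votes_inr_eq_card_inter_sym2 {E : Finset (Sym2 W)} {x y : Sym2 W → W}
    {pref : ↥E → LinearOrder (W ⊕ Unit)} (hxy : ∀ e ∈ E, e = s(x e, y e))
    (hpref : ∀ e : ↥E, PrefTiers (pref e) (edgeVoterTier (x e) (y e))) (K : Finset W) :
    votes pref (univ \ K.image Sum.inl) {Sum.inr ()} = #(E ∩ K.sym2) := by
  have hvoter (e : ↥E) : (∃ p ∈ ({Sum.inr ()} : Finset (W ⊕ Unit)),
      TopOf (pref e) (univ \ K.image Sum.inl) p) ↔ e.1 ∈ K.sym2 := by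
    simp only [mem_singleton, exists_eq_left]
    rw [topOf_inr_iff_of_prefTiers_edgeVoterTier (hpref e),
      hxy e e.2, mk_mem_sym2_iff, ← hxy e e.2]
  rw [votes, filter_congr fun e _ => hvoter e, univ_eq_attach]
  convert congrArg card (filter_attach (· ∈ K.sym2) E) using 1
  rw [card_map, card_attach, filter_mem_eq_inter]

end EdgeVoter

/-- Election (deleting opposition parties, J objective, no threshold):
parties are $p_1$ (= `Sum.inr ()`) and one party $s_w$ (= `Sum.inl w`) per vertex; one voter
per edge $e$ ranking $s_{x_e} ≻ s_{y_e} ≻ p_1 ≻$ rest.  $G$ has a $k$-clique iff one can delete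
at most $k$ vertex-parties so that $p_1$'s vote fraction reaches $(k(k-1)/2)/|E|$. -/
theorem dop_clique_reduction
    {W : Type*} [Fintype W] [DecidableEq W]
    (G : SimpleGraph W) [DecidableRel G.Adj] (hE : G.edgeFinset.Nonempty) (k : ℕ)
    (x y : Sym2 W → W) (hxy : ∀ e ∈ G.edgeFinset, e = s(x e, y e))
    (pref : ↥G.edgeFinset → LinearOrder (W ⊕ Unit))
    (hpref : ∀ e : ↥G.edgeFinset, PrefTiers (pref e)
      (Sum.elim (fun w => if w = x ↑e then (0 : ℕ) else if w = y ↑e then 1 else 3)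
        (fun _ => 2))) :
    (∃ K : Finset W, K.card = k ∧ G.IsClique (K : Set W)) ↔
    (∃ Pm : Finset (W ⊕ Unit), Pm ⊆ Finset.univ.image Sum.inl ∧ Pm.card ≤ k ∧
      ((k * (k - 1) / 2 : ℕ) : ℚ) / (G.edgeFinset.card : ℚ) ≤
        voteFrac pref (Finset.univ \ Pm) {Sum.inr ()}) := by
  have hEpos : (0 : ℚ) < #G.edgeFinset := by exact_mod_cast hE.card_pos
  have hfrac (K : Finset W) : voteFrac pref (univ \ K.image Sum.inl) {Sum.inr ()} =
      #(G.edgeFinset ∩ K.sym2) / #G.edgeFinset := by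
    rw [voteFrac, votes_inr_eq_card_inter_sym2 hxy hpref, Fintype.card_coe]
  rw [← Nat.choose_two_right]
  constructor
  · rintro ⟨K, rfl, hK⟩
    refine ⟨K.image Sum.inl, image_subset_image (subset_univ K), card_image_le, ?_⟩
    rw [hfrac]
    gcongr
    exact_mod_cast G.isClique_iff_choose_two_le_card_edgeFinset_inter_sym2.1 hK
  · rintro ⟨Pm, hPm, hcard, hle⟩
    obtain ⟨K, -, rfl⟩ := subset_image_iff.1 hPm
    rw [hfrac, div_le_div_iff_of_pos_right hEpos, Nat.cast_le] at hle
    rw [card_image_of_injective K Sum.inl_injective] at hcard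
    have hK : G.IsClique (K : Set W) :=
      G.isClique_iff_choose_two_le_card_edgeFinset_inter_sym2.2
        ((Nat.choose_le_choose 2 hcard).trans hle)
    have : Nonempty W := ⟨x hE.choose⟩
    exact G.exists_card_eq_isClique_of_choose_two_le hK
      (hle.trans (G.card_edgeFinset_inter_sym2_le K))
end

section
/- Let G=(W,E) be a finite simple graph with W nonempty and let k be a natural number. Construct the parliamentary election whose running parties are p_1 and o_2, with spoiler parties S = {s_w : w ∈ W} available for addition, and with two voters per vertex w ∈ W: one voter ranking the parties {s_u : u ∈ N[w]} first (in some fixed order), then o_2, then p_1, then all remaining parties; and one voter ranking o_2 ≻ p_1 ≻ (all remaining parties). Let the coalition be C = {p_1} ∪ S, with no electoral threshold. Then G has a dominating set of size at most k if and only if there exists a set S⁺ ⊆ S with |S⁺| ≤ k such that, in the election whose running parties are {p_1, o_2} ∪ S⁺, the vote fraction of {p_1} ∪ S⁺ is at least 1/2. -/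
open scoped Classical

/-!
Every voter's choice is the running party of smallest tier. A vertex voter of `w` therefore
votes for a spoiler exactly when some added spoiler lies in `N[w]`, and otherwise for `o₂`;
every other voter votes for `o₂`. So `{p₁} ∪ S⁺` collects one vote per vertex dominated by the
vertices of `S⁺`, out of `2|W|` votes, and reaches one half exactly when `S⁺` dominates `G`.
-/

section TopOf

variable {U : Type*} {L : LinearOrder U} {P : Finset U} {p q : U}

theorem TopOf.exists (L : LinearOrder U) (hP : P.Nonempty) : ∃ p, TopOf L P p := by
  let := L
  obtain ⟨p, hp, hmax⟩ := P.exists_max_image id hP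
  exact ⟨p, hp, fun q hq hne => lt_of_le_of_ne (hmax q hq) hne⟩

theorem TopOf.tier_le {t : U → ℕ} (hL : PrefTiers L t) (hp : TopOf L P p) (hq : q ∈ P) :
    t p ≤ t q := by
  by_contra! h
  have hne : q ≠ p := by rintro rfl; exact lt_irrefl _ h
  let := L
  exact lt_asymm (hL q p h) (hp.2 q hq hne)

end TopOf

theorem half_le_voteFrac_iff {U V : Type*} [Fintype V] [Nonempty V]
    (pref : V → LinearOrder U) (P A : Finset U) :
    (1 : ℚ) / 2 ≤ voteFrac pref P A ↔ Fintype.card V ≤ 2 * votes pref P A := by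
  have hV : (0 : ℚ) < Fintype.card V := by exact_mod_cast Fintype.card_pos
  rw [voteFrac, div_le_div_iff₀ two_pos hV]
  norm_cast
  omega

section Election

variable {W : Type*} [DecidableEq W] (G : SimpleGraph W) [DecidableRel G.Adj]

def vertexVoterTiers (w : W) : W ⊕ Fin 2 → ℕ :=
  Sum.elim (fun u => if u = w ∨ G.Adj w u then 0 else 3) (fun j => if j = 1 then 1 else 2)

def plainVoterTiers : W ⊕ Fin 2 → ℕ :=
  Sum.elim (fun _ => 2) (fun j => if j = 1 then 0 else 1)

variable {G} {pref : W ⊕ W → LinearOrder (W ⊕ Fin 2)}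

theorem exists_topOf_vertexVoter_iff
    (hprefA : ∀ w, PrefTiers (pref (Sum.inl w)) (vertexVoterTiers G w)) (S : Finset W) (w : W) :
    (∃ p ∈ insert (Sum.inr 0) (S.image Sum.inl),
        TopOf (pref (Sum.inl w)) ({Sum.inr 0, Sum.inr 1} ∪ S.image Sum.inl) p) ↔
      ∃ u ∈ S, u = w ∨ G.Adj u w := by
  constructor
  · rintro ⟨p, hpA, hp⟩
    have htier := hp.tier_le (hprefA w) (q := Sum.inr 1) (by simp)
    rcases Finset.mem_insert.1 hpA with rfl | hpS
    · simp [vertexVoterTiers] at htier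
    · obtain ⟨u, hu, rfl⟩ := Finset.mem_image.1 hpS
      refine ⟨u, hu, ?_⟩
      simp only [vertexVoterTiers, Sum.elim_inl, Sum.elim_inr] at htier
      split_ifs at htier with huw <;> simp_all [G.adj_comm]
  · rintro ⟨u, hu, huw⟩
    obtain ⟨t, ht⟩ := TopOf.exists (pref (Sum.inl w))
      (P := {Sum.inr 0, Sum.inr 1} ∪ S.image Sum.inl) ⟨Sum.inr 1, by simp⟩
    have htier := ht.tier_le (hprefA w) (q := Sum.inl u) (by simp [hu])
    refine ⟨t, ?_, ht⟩
    have hw : u = w ∨ G.Adj w u := by rwa [G.adj_comm]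
    rcases t with v | j
    · simpa using ht.1
    · simp [vertexVoterTiers, hw] at htier
      split_ifs at htier

theorem not_exists_topOf_plainVoter
    (hprefB : ∀ w, PrefTiers (pref (Sum.inr w)) plainVoterTiers) (S : Finset W) (w : W) :
    ¬ ∃ p ∈ insert (Sum.inr 0) (S.image Sum.inl),
        TopOf (pref (Sum.inr w)) ({Sum.inr 0, Sum.inr 1} ∪ S.image Sum.inl) p := by
  rintro ⟨p, hpA, hp⟩
  have htier := hp.tier_le (hprefB w) (q := Sum.inr 1) (by simp)
  rcases Finset.mem_insert.1 hpA with rfl | hpS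
  · simp [plainVoterTiers] at htier
  · obtain ⟨u, -, rfl⟩ := Finset.mem_image.1 hpS
    simp [plainVoterTiers] at htier

theorem votes_eq_card_dominated [Fintype W]
    (hprefA : ∀ w, PrefTiers (pref (Sum.inl w)) (vertexVoterTiers G w))
    (hprefB : ∀ w, PrefTiers (pref (Sum.inr w)) plainVoterTiers) (S : Finset W) :
    votes pref ({Sum.inr 0, Sum.inr 1} ∪ S.image Sum.inl) (insert (Sum.inr 0) (S.image Sum.inl)) =
      (Finset.univ.filter fun w => ∃ u ∈ S, u = w ∨ G.Adj u w).card := by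
  rw [votes, Finset.card_filter, Fintype.sum_sum_type, Finset.card_filter]
  simp only [exists_topOf_vertexVoter_iff hprefA, not_exists_topOf_plainVoter hprefB, if_false,
    Finset.sum_const_zero, add_zero]

theorem half_le_voteFrac_iff_dominates [Fintype W] [Nonempty W]
    (hprefA : ∀ w, PrefTiers (pref (Sum.inl w)) (vertexVoterTiers G w))
    (hprefB : ∀ w, PrefTiers (pref (Sum.inr w)) plainVoterTiers) (S : Finset W) :
    (1 : ℚ) / 2 ≤ voteFrac pref ({Sum.inr 0, Sum.inr 1} ∪ S.image Sum.inl)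
        (insert (Sum.inr 0) (S.image Sum.inl)) ↔ ∀ w, ∃ u ∈ S, u = w ∨ G.Adj u w := by
  rw [half_le_voteFrac_iff, votes_eq_card_dominated hprefA hprefB, Fintype.card_sum]
  set D := Finset.univ.filter fun w => ∃ u ∈ S, u = w ∨ G.Adj u w
  have hD : D.card = Fintype.card W ↔ ∀ w, ∃ u ∈ S, u = w ∨ G.Adj u w := by
    simp [D, Finset.card_eq_iff_eq_univ, Finset.eq_univ_iff_forall]
  rw [← hD]
  have := D.card_le_univ
  omega

end Election

/-- The running parties `p₁`, `o₂` are `Sum.inr 0`, `Sum.inr 1`, the spoiler `s_w` is `Sum.inl w`;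
the voters `Sum.inl w` and `Sum.inr w` are the two voters attached to the vertex `w`. -/
theorem acp_dominating_set_reduction
    {W : Type*} [Fintype W] [DecidableEq W] [Nonempty W]
    (G : SimpleGraph W) [DecidableRel G.Adj] (k : ℕ)
    (pref : W ⊕ W → LinearOrder (W ⊕ Fin 2))
    (hprefA : ∀ w : W, PrefTiers (pref (Sum.inl w))
      (Sum.elim (fun u => if u = w ∨ G.Adj w u then (0 : ℕ) else 3)
        (fun j : Fin 2 => if j = 1 then 1 else 2)))
    (hprefB : ∀ w : W, PrefTiers (pref (Sum.inr w))
      (Sum.elim (fun _ => (2 : ℕ)) (fun j : Fin 2 => if j = 1 then 0 else 1))) :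
    (∃ W' : Finset W, W'.card ≤ k ∧ ∀ w : W, ∃ u ∈ W', u = w ∨ G.Adj u w) ↔
    (∃ Sp : Finset (W ⊕ Fin 2), Sp ⊆ Finset.univ.image Sum.inl ∧ Sp.card ≤ k ∧
      (1 : ℚ) / 2 ≤ voteFrac pref ({Sum.inr 0, Sum.inr 1} ∪ Sp) (insert (Sum.inr 0) Sp)) := by
  have hdom := half_le_voteFrac_iff_dominates (G := G) hprefA hprefB
  constructor
  · rintro ⟨S, hk, hS⟩
    exact ⟨S.image Sum.inl, Finset.image_subset_image S.subset_univ,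
      Finset.card_image_le.trans hk, (hdom S).2 hS⟩
  · rintro ⟨Sp, hSp, hk, hfrac⟩
    obtain ⟨S, -, rfl⟩ := Finset.subset_image_iff.1 hSp
    rw [Finset.card_image_of_injective _ Sum.inl_injective] at hk
    exact ⟨S, hk, (hdom S).1 hfrac⟩
end

section
/- Let U be a finite set of parties, ≻ a strict linear order on U, sw : U × U → ℝ a nonnegative swap-price function, and p ∈ U. Then the minimum, over all strict linear orders ≻̂ on U having p as their maximum, of the swap cost Σ sw(a,b) taken over all ordered pairs (a,b) with a ≻ b and b ≻̂ a, equals Σ_{q : q ≻ p} sw(q,p); moreover, the minimum is attained by the order that moves p to the top and leaves the relative order of all other parties unchanged. -/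
open scoped Classical

/-!
Any order with `p` on top must invert every pair `(q, p)` with `q ≻ p`, so with nonnegative
prices its swap cost is at least `∑_{q ≻ p} sw(q, p)`. Lifting `p` to the top and keeping the
rest of `≻` inverts exactly these pairs and nothing else, so the bound is attained.
-/

section MoveTop

variable {U : Type*}

noncomputable def moveTop (L : LinearOrder U) (p : U) : LinearOrder U :=
  letI := L
  LinearOrder.lift' (fun a => toLex ((if a = p then 1 else 0 : ℕ), a))
    fun _ _ h => congrArg (fun x : ℕ ×ₗ U => (ofLex x).2) h

lemma moveTop_lt_iff (L : LinearOrder U) (p a b : U) :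
    (moveTop L p).lt a b ↔ a ≠ p ∧ b = p ∨ a ≠ p ∧ b ≠ p ∧ L.lt a b := by
  let := L
  change toLex ((if a = p then 1 else 0 : ℕ), a) < toLex ((if b = p then 1 else 0 : ℕ), b) ↔ _
  rw [Prod.Lex.lt_iff]
  by_cases ha : a = p <;> by_cases hb : b = p <;> simp [ha, hb]

lemma moveTop_lt_self (L : LinearOrder U) {p q : U} (hq : q ≠ p) : (moveTop L p).lt q p :=
  (moveTop_lt_iff L p q p).2 (Or.inl ⟨hq, rfl⟩)

lemma moveTop_lt_iff_of_ne (L : LinearOrder U) {p a b : U} (ha : a ≠ p) (hb : b ≠ p) :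
    (moveTop L p).lt a b ↔ L.lt a b := by
  simp [moveTop_lt_iff, ha, hb]

end MoveTop

section SwapCost

variable {U : Type*} [Fintype U]

noncomputable def pairsAbove (L : LinearOrder U) (p : U) : Finset (U × U) :=
  (Finset.univ.filter fun q : U => L.lt p q).map (Function.Embedding.sectL U p)

lemma mem_pairsAbove {L : LinearOrder U} {p : U} {pq : U × U} :
    pq ∈ pairsAbove L p ↔ L.lt p pq.1 ∧ pq.2 = p := by
  obtain ⟨a, b⟩ := pq
  simp [pairsAbove, eq_comm]

-- The decidability instance is an implicit argument rather than an instance argument, so that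
-- these lemmas also match the classical instance that the sums in `min_cost_to_top` elaborate to.
lemma sum_pairsAbove (L : LinearOrder U) (p : U) {_ : DecidablePred fun q : U => L.lt p q}
    (sw : U → U → ℝ) :
    ∑ pq ∈ pairsAbove L p, sw pq.1 pq.2 = ∑ q ∈ Finset.univ.filter fun q : U => L.lt p q, sw q p := by
  rw [pairsAbove, Finset.sum_map]
  exact Finset.sum_congr (Finset.filter_congr_decidable _ _ _) fun _ _ => rfl

lemma pairsAbove_subset_invPairs {L L' : LinearOrder U} {p : U}
    (hL' : ∀ q : U, q ≠ p → L'.lt q p) : pairsAbove L p ⊆ invPairs L L' := by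
  rintro ⟨q, _⟩ hq
  obtain ⟨hpq, rfl⟩ := mem_pairsAbove.1 hq
  let := L
  simpa [invPairs, hpq] using hL' q hpq.ne'

lemma invPairs_moveTop (L : LinearOrder U) (p : U) :
    invPairs L (moveTop L p) = pairsAbove L p := by
  refine Finset.Subset.antisymm (fun ⟨a, b⟩ hab => ?_)
    (pairsAbove_subset_invPairs fun _ => moveTop_lt_self L)
  simp only [invPairs, Finset.mem_filter, Finset.mem_univ, true_and, moveTop_lt_iff] at hab
  let := L
  rcases hab with ⟨hba, ⟨-, rfl⟩ | ⟨-, -, hab⟩⟩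
  · exact mem_pairsAbove.2 ⟨hba, rfl⟩
  · exact absurd hba hab.asymm

lemma sum_above_le_swapCost (L L' : LinearOrder U) {sw : U → U → ℝ} (hsw : ∀ a b, 0 ≤ sw a b)
    {p : U} {_ : DecidablePred fun q : U => L.lt p q} (hL' : ∀ q : U, q ≠ p → L'.lt q p) :
    ∑ q ∈ Finset.univ.filter fun q : U => L.lt p q, sw q p ≤ swapCost L L' sw :=
  calc ∑ q ∈ Finset.univ.filter fun q : U => L.lt p q, sw q p
      = ∑ pq ∈ pairsAbove L p, sw pq.1 pq.2 := (sum_pairsAbove L p sw).symm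
    _ ≤ swapCost L L' sw := Finset.sum_le_sum_of_subset_of_nonneg
        (pairsAbove_subset_invPairs hL') fun pq _ _ => hsw pq.1 pq.2

lemma swapCost_moveTop (L : LinearOrder U) (p : U) {_ : DecidablePred fun q : U => L.lt p q}
    (sw : U → U → ℝ) :
    swapCost L (moveTop L p) sw = ∑ q ∈ Finset.univ.filter fun q : U => L.lt p q, sw q p := by
  rw [swapCost, invPairs_moveTop]
  exact sum_pairsAbove L p sw

end SwapCost

/-- The least swap cost over all new orders having $p$ as their maximum is
$Σ_{q ≻ p} sw(q,p)$, and it is attained by the order that moves $p$ to the top while keeping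
the relative order of all other parties unchanged. -/
theorem min_cost_to_top
    {U : Type*} [Fintype U]
    (L : LinearOrder U) (sw : U → U → ℝ) (hsw : ∀ a b, 0 ≤ sw a b) (p : U) :
    IsLeast {cost : ℝ | ∃ L' : LinearOrder U,
        (∀ q : U, q ≠ p → L'.lt q p) ∧ cost = swapCost L L' sw}
      (∑ q ∈ Finset.univ.filter fun q : U => L.lt p q, sw q p) ∧
    (∃ L' : LinearOrder U,
      (∀ q : U, q ≠ p → L'.lt q p) ∧
      (∀ a b : U, a ≠ p → b ≠ p → (L'.lt a b ↔ L.lt a b)) ∧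
      swapCost L L' sw = ∑ q ∈ Finset.univ.filter fun q : U => L.lt p q, sw q p) := by
  have htop : ∀ q : U, q ≠ p → (moveTop L p).lt q p := fun _ => moveTop_lt_self L
  refine ⟨⟨⟨moveTop L p, htop, (swapCost_moveTop L p sw).symm⟩, ?_⟩,
    moveTop L p, htop, fun _ _ => moveTop_lt_iff_of_ne L, swapCost_moveTop L p sw⟩
  rintro _ ⟨L', hL', rfl⟩
  exact sum_above_le_swapCost L L' hsw hL'
end
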